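/- Let f : ℝ^{n_z} × ℝ^{n_u} → ℝ^{n_z} be polynomial and let π : ℝ^{n_z} → ℝ^{n_u} be a feed-forward fully-connected neural network with continuous activation φ, with f(0, π(0)) = 0. Let x : ℝ^{n_z} → ℝᴺ be the concatenation of the hidden-layer states of the network and X(z) = (x(z), z). Let d₁,…,d_{n_d} : ℝ^{n_z} → ℝ be polynomial and D^z = {z : d_k(z) ≥ 0 for all k}, and assume D^z contains an open neighborhood of the origin. Suppose g₁,…,g_p, h₁,…,h_q are polynomial functions on ℝ^{N+n_z} with g_i(X(z)) ≥ 0 and h_j(X(z)) = 0 for all z ∈ D^z and all i, j. Suppose there exist polynomial functions V with V(0) = 0, ρ with ρ(0) = 0 and ρ(z) > 0 for z ≠ 0, SOS functions p₁,…,p_{n_d} and s₁,…,s_p on ℝ^{N+n_z}, and polynomial functions t₁,…,t_q, such that V − ρ is SOS and X = (x,z) ↦ −∇V(z)·f(z, W^ℓx^ℓ + b^ℓ) − Σ_k p_k(X)d_k(z) − Σ_j t_j(X)h_j(X) − Σ_i s_i(X)g_i(X) is SOS. Then the origin is a stable equilibrium of the closed loop ż = f(z, π(z)): for every sufficiently small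 ε > 0 there exists δ > 0 such that every differentiable z : [0,∞) → ℝ^{n_z} with z'(t) = f(z(t), π(z(t))) for all t ≥ 0 and ‖z(0)‖ < δ satisfies ‖z(t)‖ < ε for all t ≥ 0. -/

import Mathlib

/-- The state `xᵏ` of a feed-forward fully-connected neural network with activation `φ`,
layer dimensions `dims`, weights `W` and biases `b`: `x⁰ = z` and
`x^{k+1} = φ (Wᵏ xᵏ + bᵏ)` componentwise. -/
noncomputable def netState (φ : ℝ → ℝ) (dims : ℕ → ℕ)
    (W : ∀ k : ℕ, Matrix (Fin (dims (k + 1))) (Fin (dims k)) ℝ)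
    (b : ∀ k : ℕ, Fin (dims (k + 1)) → ℝ) :
    (k : ℕ) → (Fin (dims 0) → ℝ) → Fin (dims k) → ℝ
  | 0, z => z
  | k + 1, z => fun i => φ ((W k).mulVec (netState φ dims W b k z) i + b k i)

/-- Index type for the joint variable `X = (x, z)` consisting of all hidden-layer states
`x¹, …, x^{L+1}` (layers `ℓ = L + 1`) together with the network input `z`. -/
def NetIdx (dims : ℕ → ℕ) (L : ℕ) : Type :=
  (Σ k : Fin (L + 1), Fin (dims (k.1 + 1))) ⊕ Fin (dims 0)

/-- The concatenation `X(z) = (x(z), z)` of all hidden-layer states with the input. -/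
noncomputable def netX (φ : ℝ → ℝ) (dims : ℕ → ℕ)
    (W : ∀ k : ℕ, Matrix (Fin (dims (k + 1))) (Fin (dims k)) ℝ)
    (b : ∀ k : ℕ, Fin (dims (k + 1)) → ℝ) (L : ℕ)
    (z : Fin (dims 0) → ℝ) : NetIdx dims L → ℝ :=
  Sum.elim (fun s => netState φ dims W b (s.1.1 + 1) z s.2) z

/-- A function `(σ → ℝ) → ℝ` is a polynomial function. -/
def IsPolyFun {σ : Type*} (g : (σ → ℝ) → ℝ) : Prop :=
  ∃ P : MvPolynomial σ ℝ, ∀ x, g x = MvPolynomial.eval x P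

/-- A function `(σ → ℝ) → ℝ` is a sum of squares (SOS) of polynomial functions. -/
def IsSOSFun {σ : Type*} (g : (σ → ℝ) → ℝ) : Prop :=
  ∃ (m : ℕ) (r : Fin m → MvPolynomial σ ℝ),
    ∀ x, g x = ∑ i, (MvPolynomial.eval x (r i)) ^ 2

/-!
On `D^z` the multipliers make every correction term of the certificate nonnegative or zero
(`pₖ, sᵢ` are SOS, `dₖ, gᵢ ≥ 0`, `hⱼ = 0`), so evaluating the certificate at `X(z)` gives
`∇V(z)·f(z, π(z)) ≤ 0`; and `V ≥ ρ > 0` off the origin. This is Lyapunov's setting: `V` has a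
positive minimum `m` on the sphere of radius `ε` inside `D^z`, and a trajectory starting where
`V < m` cannot reach that sphere, since `V` does not increase before the first time it does.
-/

open Metric Set Finset

lemma IsSOSFun.nonneg {σ : Type*} {g : (σ → ℝ) → ℝ} (hg : IsSOSFun g) (x : σ → ℝ) :
    0 ≤ g x := by
  obtain ⟨m, r, hr⟩ := hg
  rw [hr]
  exact sum_nonneg fun i _ => sq_nonneg _

lemma IsPolyFun.differentiable_of_toLp {ι : Type*} [Fintype ι] {V : EuclideanSpace ℝ ι → ℝ}
    (hV : IsPolyFun fun z : ι → ℝ => V (WithLp.toLp 2 z)) : Differentiable ℝ V := by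
  obtain ⟨P, hP⟩ := hV
  have hVeq : V = fun x => MvPolynomial.eval (EuclideanSpace.equiv ι ℝ x) P := funext fun x => hP x
  rw [hVeq, ← differentiableOn_univ]
  exact (AnalyticOnNhd.eval_continuousLinearMap
    (EuclideanSpace.equiv ι ℝ : EuclideanSpace ℝ ι →L[ℝ] ι → ℝ) P).differentiableOn

lemma ContinuousOn.exists_first_eq {u : ℝ → ℝ} {a b c : ℝ} (hab : a ≤ b)
    (hu : ContinuousOn u (Icc a b)) (ha : u a < c) (hb : c ≤ u b) :
    ∃ T ∈ Ioc a b, u T = c ∧ ∀ τ ∈ Ico a T, u τ < c := by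
  set S := Icc a b ∩ u ⁻¹' Ici c
  have hbS : b ∈ S := ⟨right_mem_Icc.mpr hab, hb⟩
  have hSbdd : BddBelow S := ⟨a, fun τ hτ => hτ.1.1⟩
  have hTS : sInf S ∈ S :=
    (hu.preimage_isClosed_of_isClosed isClosed_Icc isClosed_Ici).csInf_mem ⟨b, hbS⟩ hSbdd
  have hfirst : ∀ τ ∈ Icc a (sInf S), c ≤ u τ → sInf S ≤ τ := fun τ hτ hcτ =>
    csInf_le hSbdd ⟨⟨hτ.1, hτ.2.trans (csInf_le hSbdd hbS)⟩, hcτ⟩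
  -- the level `c` is attained on `[a, sInf S]`, and only `sInf S` itself can attain it there
  obtain ⟨τ, hτ, huτ⟩ := intermediate_value_Icc hTS.1.1 (hu.mono (Icc_subset_Icc_right hTS.1.2))
    ⟨ha.le, hTS.2⟩
  rw [le_antisymm hτ.2 (hfirst τ hτ huτ.ge)] at huτ
  refine ⟨sInf S, ⟨hTS.1.1.lt_of_ne fun haT => ha.ne (haT ▸ huτ), hTS.1.2⟩, huτ,
    fun σ hσ => ?_⟩
  by_contra! hcσ
  exact hσ.2.not_ge (hfirst σ (Ico_subset_Icc_self hσ) hcσ)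

theorem lyapunov_stable {E : Type*} [NormedAddCommGroup E] [NormedSpace ℝ E] [ProperSpace E]
    {F : E → E} {V : E → ℝ} {r ε : ℝ} (hV : Differentiable ℝ V) (hV0 : V 0 = 0)
    (hVpos : ∀ x, x ≠ 0 → 0 < V x) (hdecr : ∀ x ∈ ball (0 : E) r, fderiv ℝ V x (F x) ≤ 0)
    (hε : 0 < ε) (hεr : ε ≤ r) :
    ∃ δ > 0, ∀ z : ℝ → E, (∀ τ, 0 ≤ τ → HasDerivAt z (F (z τ)) τ) →
      ‖z 0‖ < δ → ∀ τ, 0 ≤ τ → ‖z τ‖ < ε := by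
  obtain ⟨m, hm, hmV⟩ := (isCompact_sphere (0 : E) ε).exists_forall_le' hV.continuous.continuousOn
    fun x hx => hVpos x (ne_of_mem_sphere hx hε.ne')
  obtain ⟨δ, hδ, hVδ⟩ := Metric.eventually_nhds_iff.mp
    ((hV.continuous.tendsto 0).eventually_lt_const (hV0 ▸ hm))
  refine ⟨min δ ε, lt_min hδ hε, fun z hz hz0 τ₁ hτ₁ => ?_⟩
  by_contra! hτ₁ε
  obtain ⟨T, ⟨hT0, -⟩, hzT, hlt⟩ := ContinuousOn.exists_first_eq (u := fun τ => ‖z τ‖) hτ₁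
    (fun τ hτ => (hz τ hτ.1).continuousAt.norm.continuousWithinAt)
    (hz0.trans_le (min_le_right _ _)) hτ₁ε
  have hanti : AntitoneOn (V ∘ z) (Icc 0 T) := by
    refine antitoneOn_of_hasDerivWithinAt_nonpos (f' := fun τ => fderiv ℝ V (z τ) (F (z τ)))
      (convex_Icc 0 T)
      (fun τ hτ => (hV.continuous.continuousAt.comp (hz τ hτ.1).continuousAt).continuousWithinAt)
      (fun τ hτ => ?_) (fun τ hτ => ?_) <;> rw [interior_Icc] at hτ
    · exact ((hV _).hasFDerivAt.comp_hasDerivAt τ (hz τ hτ.1.le)).hasDerivWithinAt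
    · exact hdecr _ (mem_ball_zero_iff.mpr ((hlt τ (Ioo_subset_Ico_self hτ)).trans_le hεr))
  have hVT : m ≤ V (z T) := hmV _ (mem_sphere_zero_iff_norm.mpr hzT)
  have hVzT : V (z T) ≤ V (z 0) :=
    hanti (left_mem_Icc.mpr hT0.le) (right_mem_Icc.mpr hT0.le) hT0.le
  have hVz0 : V (z 0) < m := hVδ (by rw [dist_zero_right]; exact hz0.trans_le (min_le_left _ _))
  linarith

theorem stmt_7_general {nu L p q nd : ℕ} (dims : ℕ → ℕ) (φ : ℝ → ℝ)
    (W : ∀ k : ℕ, Matrix (Fin (dims (k + 1))) (Fin (dims k)) ℝ)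
    (b : ∀ k : ℕ, Fin (dims (k + 1)) → ℝ)
    (Wout : Matrix (Fin nu) (Fin (dims (L + 1))) ℝ) (bout : Fin nu → ℝ)
    (π : EuclideanSpace ℝ (Fin (dims 0)) → EuclideanSpace ℝ (Fin nu))
    (hπ : ∀ z, π z = fun i => Wout.mulVec (netState φ dims W b (L + 1) z) i + bout i)
    (f : EuclideanSpace ℝ (Fin (dims 0)) → EuclideanSpace ℝ (Fin nu) →
      EuclideanSpace ℝ (Fin (dims 0)))
    (d : Fin nd → EuclideanSpace ℝ (Fin (dims 0)) → ℝ)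
    (hDnhds : {z : EuclideanSpace ℝ (Fin (dims 0)) | ∀ k, 0 ≤ d k z} ∈ nhds 0)
    (g : Fin p → (NetIdx dims L → ℝ) → ℝ)
    (h : Fin q → (NetIdx dims L → ℝ) → ℝ)
    (hg : ∀ i z, (∀ k, 0 ≤ d k z) → 0 ≤ g i (netX φ dims W b L z))
    (hh : ∀ j z, (∀ k, 0 ≤ d k z) → h j (netX φ dims W b L z) = 0)
    (V : EuclideanSpace ℝ (Fin (dims 0)) → ℝ)
    (hVpoly : IsPolyFun fun z : Fin (dims 0) → ℝ => V (WithLp.toLp 2 z)) (hV0 : V 0 = 0)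
    (ρ : EuclideanSpace ℝ (Fin (dims 0)) → ℝ)
    (hρpos : ∀ z : EuclideanSpace ℝ (Fin (dims 0)), z ≠ 0 → 0 < ρ z)
    (hVρ : IsSOSFun fun z : Fin (dims 0) → ℝ => V (WithLp.toLp 2 z) - ρ (WithLp.toLp 2 z))
    (pm : Fin nd → (NetIdx dims L → ℝ) → ℝ) (hpm : ∀ k, IsSOSFun (pm k))
    (s : Fin p → (NetIdx dims L → ℝ) → ℝ) (hs : ∀ i, IsSOSFun (s i))
    (t : Fin q → (NetIdx dims L → ℝ) → ℝ)
    (hmain : IsSOSFun fun X : NetIdx dims L → ℝ =>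
      -(inner ℝ (gradient V (WithLp.toLp 2 fun i => X (Sum.inr i)))
          (f (WithLp.toLp 2 fun i => X (Sum.inr i))
            (WithLp.toLp 2 fun i => Wout.mulVec (fun j => X (Sum.inl ⟨⟨L, Nat.lt_succ_self L⟩, j⟩)) i
              + bout i)) : ℝ)
      - ∑ k, pm k X * d k (WithLp.toLp 2 fun i => X (Sum.inr i))
      - ∑ j, t j X * h j X - ∑ i, s i X * g i X) :
    ∃ ε₀ > 0, ∀ ε, 0 < ε → ε ≤ ε₀ →
      ∃ δ > 0, ∀ z : ℝ → EuclideanSpace ℝ (Fin (dims 0)),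
        (∀ τ, 0 ≤ τ → HasDerivAt z (f (z τ) (π (z τ))) τ) →
        ‖z 0‖ < δ → ∀ τ, 0 ≤ τ → ‖z τ‖ < ε := by
  have hVdiff : Differentiable ℝ V := hVpoly.differentiable_of_toLp
  have hVpos : ∀ z, z ≠ 0 → 0 < V z := fun z hz =>
    (hρpos z hz).trans_le (sub_nonneg.mp (hVρ.nonneg z.ofLp))
  have hdecr : ∀ z ∈ {z | ∀ k, 0 ≤ d k z}, fderiv ℝ V z (f z (π z)) ≤ 0 := by
    intro z hz
    set X := netX φ dims W b L z
    have hcert : 0 ≤ -fderiv ℝ V z (f z (π z)) - ∑ k, pm k X * d k z - ∑ j, t j X * h j X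
        - ∑ i, s i X * g i X := by
      -- `hπ` describes `π z` through its coordinate function `(π z).ofLp`
      rw [← toDual_gradient, InnerProductSpace.toDual_apply_apply,
        show π z = WithLp.toLp 2 (π z).ofLp from rfl, hπ]
      exact hmain.nonneg X
    have hpd : 0 ≤ ∑ k, pm k X * d k z :=
      sum_nonneg fun k _ => mul_nonneg ((hpm k).nonneg X) (hz k)
    have hth : ∑ j, t j X * h j X = 0 := sum_eq_zero fun j _ => by rw [hh j z hz, mul_zero]
    have hsg : 0 ≤ ∑ i, s i X * g i X :=
      sum_nonneg fun i _ => mul_nonneg ((hs i).nonneg X) (hg i z hz)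
    linarith
  obtain ⟨r, hr, hball⟩ := Metric.mem_nhds_iff.mp hDnhds
  exact ⟨r, hr, fun ε hε hεr =>
    lyapunov_stable hVdiff hV0 hVpos (fun z hz => hdecr z (hball hz)) hε hεr⟩

/-- **SOS certificate for local stability of a neural feedback loop.**
Given a polynomial plant `ż = f(z, u)` in feedback with an `(L+1)`-layer neural network
controller `π`, a region `D^z = {z | dₖ(z) ≥ 0}` containing a neighbourhood of the origin,
and polynomial constraints `gᵢ(X(z)) ≥ 0`, `hⱼ(X(z)) = 0` valid for `z ∈ D^z`, if there are
polynomial `V` (with `V 0 = 0`), a positive definite polynomial `ρ`, SOS multipliers `pₖ`,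
`sᵢ` and polynomial multipliers `tⱼ` such that `V − ρ` is SOS and
`X ↦ −∇V(z)·f(z, W^ℓ x^ℓ + b^ℓ) − Σₖ pₖ(X) dₖ(z) − Σⱼ tⱼ(X) hⱼ(X) − Σᵢ sᵢ(X) gᵢ(X)` is SOS,
then the origin is a stable equilibrium of the closed loop: for every sufficiently small
`ε > 0` there is `δ > 0` as in the definition of stability. -/
theorem stmt_7 {nu L p q nd : ℕ} (dims : ℕ → ℕ) (φ : ℝ → ℝ) (hφ : Continuous φ)
    (W : ∀ k : ℕ, Matrix (Fin (dims (k + 1))) (Fin (dims k)) ℝ)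
    (b : ∀ k : ℕ, Fin (dims (k + 1)) → ℝ)
    (Wout : Matrix (Fin nu) (Fin (dims (L + 1))) ℝ) (bout : Fin nu → ℝ)
    (π : EuclideanSpace ℝ (Fin (dims 0)) → EuclideanSpace ℝ (Fin nu))
    (hπ : ∀ z, π z = fun i => Wout.mulVec (netState φ dims W b (L + 1) z) i + bout i)
    (f : EuclideanSpace ℝ (Fin (dims 0)) → EuclideanSpace ℝ (Fin nu) →
      EuclideanSpace ℝ (Fin (dims 0)))
    (hf : ∀ i : Fin (dims 0), ∃ P : MvPolynomial (Fin (dims 0) ⊕ Fin nu) ℝ,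
        ∀ z u, f z u i = MvPolynomial.eval (Sum.elim z u) P)
    (hequil : f 0 (π 0) = 0)
    (d : Fin nd → EuclideanSpace ℝ (Fin (dims 0)) → ℝ)
    (hdpoly : ∀ k, IsPolyFun fun z : Fin (dims 0) → ℝ => d k (WithLp.toLp 2 z))
    (hDnhds : {z : EuclideanSpace ℝ (Fin (dims 0)) | ∀ k, 0 ≤ d k z} ∈ nhds 0)
    (g : Fin p → (NetIdx dims L → ℝ) → ℝ) (hgpoly : ∀ i, IsPolyFun (g i))
    (h : Fin q → (NetIdx dims L → ℝ) → ℝ) (hhpoly : ∀ j, IsPolyFun (h j))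
    (hg : ∀ i z, (∀ k, 0 ≤ d k z) → 0 ≤ g i (netX φ dims W b L z))
    (hh : ∀ j z, (∀ k, 0 ≤ d k z) → h j (netX φ dims W b L z) = 0)
    (V : EuclideanSpace ℝ (Fin (dims 0)) → ℝ)
    (hVpoly : IsPolyFun fun z : Fin (dims 0) → ℝ => V (WithLp.toLp 2 z)) (hV0 : V 0 = 0)
    (ρ : EuclideanSpace ℝ (Fin (dims 0)) → ℝ)
    (hρpoly : IsPolyFun fun z : Fin (dims 0) → ℝ => ρ (WithLp.toLp 2 z))
    (hρ0 : ρ 0 = 0) (hρpos : ∀ z : EuclideanSpace ℝ (Fin (dims 0)), z ≠ 0 → 0 < ρ z)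
    (hVρ : IsSOSFun fun z : Fin (dims 0) → ℝ => V (WithLp.toLp 2 z) - ρ (WithLp.toLp 2 z))
    (pm : Fin nd → (NetIdx dims L → ℝ) → ℝ) (hpm : ∀ k, IsSOSFun (pm k))
    (s : Fin p → (NetIdx dims L → ℝ) → ℝ) (hs : ∀ i, IsSOSFun (s i))
    (t : Fin q → (NetIdx dims L → ℝ) → ℝ) (ht : ∀ j, IsPolyFun (t j))
    (hmain : IsSOSFun fun X : NetIdx dims L → ℝ =>
      -(inner ℝ (gradient V (WithLp.toLp 2 fun i => X (Sum.inr i)))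
          (f (WithLp.toLp 2 fun i => X (Sum.inr i))
            (WithLp.toLp 2 fun i => Wout.mulVec (fun j => X (Sum.inl ⟨⟨L, Nat.lt_succ_self L⟩, j⟩)) i
              + bout i)) : ℝ)
      - ∑ k, pm k X * d k (WithLp.toLp 2 fun i => X (Sum.inr i))
      - ∑ j, t j X * h j X - ∑ i, s i X * g i X) :
    ∃ ε₀ > 0, ∀ ε, 0 < ε → ε ≤ ε₀ →
      ∃ δ > 0, ∀ z : ℝ → EuclideanSpace ℝ (Fin (dims 0)),
        (∀ τ, 0 ≤ τ → HasDerivAt z (f (z τ) (π (z τ))) τ) →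
        ‖z 0‖ < δ → ∀ τ, 0 ≤ τ → ‖z τ‖ < ε :=
  stmt_7_general dims φ W b Wout bout π hπ f d hDnhds g h hg hh V hVpoly hV0 ρ hρpos hVρ pm hpm s hs
    t hmain
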